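/- Let G be a real m×n matrix, λ > 0, and suppose A ∈ ℝ^{m×r}, B ∈ ℝ^{n×r} satisfy λA = GB and λB = GᵀA. Then ‖ABᵀ‖_* = (‖A‖_F² + ‖B‖_F²)/2. -/

import Mathlib

open Matrix

/-- Squared Frobenius norm of a real matrix. -/
noncomputable def frobSq {m n : ℕ} (A : Matrix (Fin m) (Fin n) ℝ) : ℝ :=
  ∑ i, ∑ j, (A i j) ^ 2

/-- Frobenius norm. -/
noncomputable def frobNorm {m n : ℕ} (A : Matrix (Fin m) (Fin n) ℝ) : ℝ :=
  Real.sqrt (frobSq A)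

lemma wwT_posSemidef {m n : ℕ} (W : Matrix (Fin m) (Fin n) ℝ) :
    (W * Wᵀ).PosSemidef := by
  simpa [Matrix.conjTranspose_eq_transpose_of_trivial] using
    W.posSemidef_self_mul_conjTranspose

/-- The old `Matrix.PosSemidef.sqrt` (removed from Mathlib), spelled out. -/
noncomputable def posSemidefSqrt {n : ℕ} {M : Matrix (Fin n) (Fin n) ℝ} (hM : M.PosSemidef) :
    Matrix (Fin n) (Fin n) ℝ :=
  hM.1.eigenvectorUnitary.1 * diagonal ((↑) ∘ (√·) ∘ hM.1.eigenvalues) *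
    (star hM.1.eigenvectorUnitary : Matrix (Fin n) (Fin n) ℝ)

/-- Nuclear norm: trace of the PSD square root of `W * Wᵀ`. -/
noncomputable def nuclearNorm {m n : ℕ} (W : Matrix (Fin m) (Fin n) ℝ) : ℝ :=
  (posSemidefSqrt (wwT_posSemidef W)).trace

/-!
Stationarity forces the factors to be balanced: `λ AᵀA = (GB)ᵀA = Bᵀ(GᵀA) = λ BᵀB`.
Then `(ABᵀ)(ABᵀ)ᵀ = A(BᵀB)Aᵀ = A(AᵀA)Aᵀ = (AAᵀ)²`, so by uniqueness of positive semidefinite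
square roots the nuclear norm of `ABᵀ` is `tr(AAᵀ) = ‖A‖_F²`, while
`‖A‖_F² = tr(AᵀA) = tr(BᵀB) = ‖B‖_F²`.
-/

open scoped MatrixOrder

lemma posSemidefSqrt_eq_cfcSqrt {k : ℕ} {M : Matrix (Fin k) (Fin k) ℝ} (hM : M.PosSemidef) :
    posSemidefSqrt hM = CFC.sqrt M := by
  rw [CFC.sqrt_eq_real_sqrt M hM.nonneg, cfcₙ_eq_cfc, hM.1.cfc_eq]
  rfl

lemma posSemidefSqrt_eq_of_mul_self_eq {k : ℕ} {P M : Matrix (Fin k) (Fin k) ℝ}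
    (hM : M.PosSemidef) (hP : P.PosSemidef) (h : P * P = M) : posSemidefSqrt hM = P := by
  rw [posSemidefSqrt_eq_cfcSqrt, CFC.sqrt_unique h hP.nonneg]

lemma trace_mul_transpose_self {m n : ℕ} (A : Matrix (Fin m) (Fin n) ℝ) :
    (A * Aᵀ).trace = frobSq A := by
  simp [Matrix.trace, Matrix.mul_apply, frobSq, sq]

section

variable {m n r K : Type*} [Fintype m] [Fintype n] [Fintype r]

lemma transpose_mul_self_eq_of_stationary [Field K] {G : Matrix m n K} {lam : K} (hlam : lam ≠ 0)
    {A : Matrix m r K} {B : Matrix n r K} (hA : lam • A = G * B) (hB : lam • B = Gᵀ * A) :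
    Aᵀ * A = Bᵀ * B := by
  refine smul_right_injective _ hlam ?_
  calc lam • (Aᵀ * A) = (lam • A)ᵀ * A := by rw [transpose_smul, smul_mul]
    _ = Bᵀ * (Gᵀ * A) := by rw [hA, transpose_mul, Matrix.mul_assoc]
    _ = lam • (Bᵀ * B) := by rw [← hB, Matrix.mul_smul]

lemma mul_transpose_mul_transpose_eq_of_balanced [CommSemiring K]
    {A : Matrix m r K} {B : Matrix n r K} (h : Aᵀ * A = Bᵀ * B) :
    A * Bᵀ * (A * Bᵀ)ᵀ = A * Aᵀ * (A * Aᵀ) := by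
  calc A * Bᵀ * (A * Bᵀ)ᵀ = A * (Bᵀ * B) * Aᵀ := by
        simp only [transpose_mul, transpose_transpose, Matrix.mul_assoc]
    _ = A * Aᵀ * (A * Aᵀ) := by rw [← h]; simp only [Matrix.mul_assoc]

end

section

variable {m n r : ℕ} {A : Matrix (Fin m) (Fin r) ℝ} {B : Matrix (Fin n) (Fin r) ℝ}

lemma frobSq_eq_of_balanced (h : Aᵀ * A = Bᵀ * B) : frobSq A = frobSq B := by
  rw [← trace_mul_transpose_self, ← trace_mul_transpose_self, trace_mul_comm, trace_mul_comm B, h]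

lemma nuclearNorm_mul_transpose_of_balanced (h : Aᵀ * A = Bᵀ * B) :
    nuclearNorm (A * Bᵀ) = frobSq A := by
  rw [nuclearNorm, posSemidefSqrt_eq_of_mul_self_eq _ (wwT_posSemidef A)
    (mul_transpose_mul_transpose_eq_of_balanced h).symm, trace_mul_transpose_self]

end

/-- at a stationary point (`λA = GB`, `λB = GᵀA`, λ > 0),
the nuclear norm of `ABᵀ` equals `(‖A‖_F² + ‖B‖_F²)/2`. -/
theorem nuclearNorm_eq_of_stationary {m n r : ℕ}
    (G : Matrix (Fin m) (Fin n) ℝ) (lam : ℝ) (hlam : 0 < lam)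
    (A : Matrix (Fin m) (Fin r) ℝ) (B : Matrix (Fin n) (Fin r) ℝ)
    (hA : lam • A = G * B) (hB : lam • B = Gᵀ * A) :
    nuclearNorm (A * Bᵀ) = (frobSq A + frobSq B) / 2 := by
  have balanced : Aᵀ * A = Bᵀ * B := transpose_mul_self_eq_of_stationary hlam.ne' hA hB
  rw [nuclearNorm_mul_transpose_of_balanced balanced, ← frobSq_eq_of_balanced balanced]
  ring
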